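/- Degenerate superadditivity of h(r) = r√(2+r²): there are absolute constants 0 < c ≤ C such that for all r, s > 0, c · r s (r+s) / (√(2+r²) + √(2+s²)) ≤ h(r+s) − h(r) − h(s) ≤ C · r s (r+s) / (√(2+r²) + √(2+s²)). -/

import Mathlib

/-!
Writing `a = √(2+r²)`, `b = √(2+s²)`, `u = √(2+(r+s)²)`, we have
`h(r+s) - h(r) - h(s) = r (u - a) + s (u - b)`, and rationalizing the two differences gives
`rs(2r+s)/(u+a) + rs(r+2s)/(u+b)`, whose numerators add up to `3rs(r+s)`.
Since `r ↦ √(2+r²)` is increasing on `[0, ∞)` and `1`-Lipschitz, both denominators lie between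
`a + b` and `2(a + b)`, so the defect lies between `3/2` and `3` times `rs(r+s)/(a+b)`.
-/

noncomputable section

/-- The radial profile `h(r) = r√(2+r²)` of the symbol `H(ξ) = |ξ|√(2+|ξ|²)` of the
operator `H = √(-Δ(2-Δ))` linearizing the Gross-Pitaevskii equation. -/
def hrad (r : ℝ) : ℝ := r * Real.sqrt (2 + r ^ 2)

open Real

lemma sqrt_sub_sqrt_eq_div {x y : ℝ} (hx : 0 ≤ x) (hy : 0 < y) :
    √x - √y = (x - y) / (√x + √y) := by
  have hpos : 0 < √x + √y := add_pos_of_nonneg_of_pos (sqrt_nonneg x) (sqrt_pos.2 hy)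
  rw [eq_div_iff hpos.ne']
  linear_combination sq_sqrt hx - sq_sqrt hy.le

lemma sqrt_add_sq_le_sqrt_add_add_sq (κ : ℝ) {r s : ℝ} (hr : 0 ≤ r) (hs : 0 ≤ s) :
    √(κ + r ^ 2) ≤ √(κ + (r + s) ^ 2) :=
  sqrt_le_sqrt (by nlinarith)

lemma sqrt_add_add_sq_le_sqrt_add_sq_add_abs {κ : ℝ} (hκ : 0 ≤ κ) (r s : ℝ) :
    √(κ + (r + s) ^ 2) ≤ √(κ + r ^ 2) + |s| := by
  have hr : r * s ≤ √(κ + r ^ 2) * |s| := calc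
    r * s ≤ |r| * |s| := by rw [← abs_mul]; exact le_abs_self _
    _ ≤ √(κ + r ^ 2) * |s| := by gcongr; exact abs_le_sqrt (by linarith)
  rw [sqrt_le_left (by positivity), add_sq _ |s|, sq_sqrt (by positivity), sq_abs]
  linarith

lemma add_div_two_mul_le_div_add_div {p q D d₁ d₂ : ℝ} (hp : 0 ≤ p) (hq : 0 ≤ q)
    (hd₁ : 0 < d₁) (hd₂ : 0 < d₂) (hd₁D : d₁ ≤ 2 * D) (hd₂D : d₂ ≤ 2 * D) :
    (p + q) / (2 * D) ≤ p / d₁ + q / d₂ := by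
  rw [add_div]
  exact add_le_add (div_le_div_of_nonneg_left hp hd₁ hd₁D) (div_le_div_of_nonneg_left hq hd₂ hd₂D)

lemma div_add_div_le_add_div {p q D d₁ d₂ : ℝ} (hp : 0 ≤ p) (hq : 0 ≤ q) (hD : 0 < D)
    (hd₁ : D ≤ d₁) (hd₂ : D ≤ d₂) : p / d₁ + q / d₂ ≤ (p + q) / D := by
  rw [add_div]
  exact add_le_add (div_le_div_of_nonneg_left hp hD hd₁) (div_le_div_of_nonneg_left hq hD hd₂)

lemma hrad_add_sub_hrad_sub_hrad (r s : ℝ) :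
    hrad (r + s) - hrad r - hrad s =
      r * s * (2 * r + s) / (√(2 + (r + s) ^ 2) + √(2 + r ^ 2)) +
        r * s * (r + 2 * s) / (√(2 + (r + s) ^ 2) + √(2 + s ^ 2)) := by
  have hr := sqrt_sub_sqrt_eq_div (x := 2 + (r + s) ^ 2) (y := 2 + r ^ 2) (by positivity)
    (by positivity)
  have hs := sqrt_sub_sqrt_eq_div (x := 2 + (r + s) ^ 2) (y := 2 + s ^ 2) (by positivity)
    (by positivity)
  calc hrad (r + s) - hrad r - hrad s
      = r * (√(2 + (r + s) ^ 2) - √(2 + r ^ 2)) + s * (√(2 + (r + s) ^ 2) - √(2 + s ^ 2)) := by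
        unfold hrad; ring
    _ = _ := by rw [hr, hs]; ring

/-- Degenerate superadditivity of `h(r) = r√(2+r²)`:
`h(r+s) - h(r) - h(s) ≍ rs(r+s)/(√(2+r²)+√(2+s²))` for `r, s > 0`. -/
theorem hrad_superadditivity :
    ∃ c C : ℝ, 0 < c ∧ c ≤ C ∧ ∀ r s : ℝ, 0 < r → 0 < s →
      c * (r * s * (r + s) / (Real.sqrt (2 + r ^ 2) + Real.sqrt (2 + s ^ 2)))
          ≤ hrad (r + s) - hrad r - hrad s ∧
      hrad (r + s) - hrad r - hrad s
          ≤ C * (r * s * (r + s) / (Real.sqrt (2 + r ^ 2) + Real.sqrt (2 + s ^ 2))) := by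
  refine ⟨3 / 2, 3, by norm_num, by norm_num, fun r s hr hs => ?_⟩
  rw [hrad_add_sub_hrad_sub_hrad]
  set a := √(2 + r ^ 2)
  set b := √(2 + s ^ 2)
  set u := √(2 + (r + s) ^ 2)
  have hab : 0 < a + b := by positivity
  have hau : a ≤ u := sqrt_add_sq_le_sqrt_add_add_sq 2 hr.le hs.le
  have hbu : b ≤ u := by
    simpa only [add_comm s r] using sqrt_add_sq_le_sqrt_add_add_sq 2 hs.le hr.le
  have hu : u ≤ a + s := by
    simpa only [abs_of_pos hs] using sqrt_add_add_sq_le_sqrt_add_sq_add_abs zero_le_two r s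
  have hs_le : s ≤ b := le_sqrt_of_sq_le (by linarith)
  have hnum : r * s * (2 * r + s) + r * s * (r + 2 * s) = 3 * (r * s * (r + s)) := by ring
  constructor
  · calc 3 / 2 * (r * s * (r + s) / (a + b))
        = (r * s * (2 * r + s) + r * s * (r + 2 * s)) / (2 * (a + b)) := by
          rw [hnum, mul_comm 2, ← div_div]; ring
      _ ≤ _ := add_div_two_mul_le_div_add_div (by positivity) (by positivity) (by positivity)
          (by positivity) (by linarith) (by linarith)
  · calc _ ≤ (r * s * (2 * r + s) + r * s * (r + 2 * s)) / (a + b) :=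
          div_add_div_le_add_div (by positivity) (by positivity) hab (by linarith) (by linarith)
      _ = 3 * (r * s * (r + s) / (a + b)) := by rw [hnum]; ring
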